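/- Fix t ∈ (0,1). Assume there exist a constant C > 0 and a neighborhood U ⊆ [0,1] of t such that μ_τ(A) ≤ C·m(A) for every Borel set A ⊆ X and every τ ∈ U, and assume m(e_t(G)^{ε₀}) < ∞ for some ε₀ > 0. Then for every Borel set K ⊆ G one has lim_{ε→0⁺} (1/(2ε)) ∫_K ℒ¹(I_t(γ) ∩ (t−ε, t+ε)) 𝛄(dγ) = 𝛄(K). -/

import Mathlib

/-! Write `S := e_t(G)`, a closed set. Inside the window `(t - ε, t + ε)` the times missing from
`I_t(γ)` are those with `γ_τ ∉ S`, and by Tonelli their `K`-average equals the time integral over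
the window of `𝛄(K ∩ {γ_τ ∉ S})`. Curves in the compact family `G` of geodesics are uniformly
Lipschitz in time, so for `γ ∈ K` and `|τ - t| < ε` the point `γ_τ` lies in `S^{Lε} \ S`, whose
`μ_τ`-measure is at most `C·m(S^{Lε} \ S)`. This tends to `0` because `S` is closed and has a
thickening of finite measure, so the missing proportion of the window vanishes in the limit. -/

open MeasureTheory Set Filter Metric Topology
open scoped ENNReal

/-- Evaluation of a continuous curve `γ : C([0,1], X)` at a real time `τ`
(times outside `[0,1]` are clamped via `projIcc`; we only use `τ ∈ [0,1]`). -/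
noncomputable def ev {X : Type*} [TopologicalSpace X] (τ : ℝ) (γ : C(unitInterval, X)) : X :=
  γ (Set.projIcc 0 1 zero_le_one τ)

/-- A curve `γ ∈ C([0,1], X)` is a constant-speed geodesic if
`d(γ_s, γ_τ) = |s - τ| · d(γ_0, γ_1)` for all `s, τ ∈ [0,1]`. -/
def IsCSGeodesic {X : Type*} [MetricSpace X] (γ : C(unitInterval, X)) : Prop :=
  ∀ s τ : unitInterval, dist (γ s) (γ τ) = |(s : ℝ) - (τ : ℝ)| * dist (γ 0) (γ 1)

/-- The (topological) support of a Borel measure: the set of points all of whose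
open neighborhoods have positive measure. -/
def mSupport {α : Type*} [TopologicalSpace α] [MeasurableSpace α]
    (μ : MeasureTheory.Measure α) : Set α :=
  {x | ∀ U : Set α, IsOpen U → x ∈ U → 0 < μ U}

theorem lintegral_measure_section_add_lintegral_measure_section_compl {α β : Type*}
    [MeasurableSpace α] [MeasurableSpace β] (μ : Measure α) (ν : Measure β) [SFinite μ]
    [SFinite ν] {s : Set (α × β)} (hs : MeasurableSet s) :
    ∫⁻ x, ν (Prod.mk x ⁻¹' s) ∂μ + ∫⁻ y, μ ((·, y) ⁻¹' sᶜ) ∂ν = μ univ * ν univ := by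
  rw [← Measure.prod_apply hs, ← Measure.prod_apply_symm hs.compl, measure_add_measure_compl hs,
    ← univ_prod_univ, Measure.prod_prod]

theorem tendsto_average_volume_sections_Ioo {Ω : Type*} [MeasurableSpace Ω] (μ : Measure Ω)
    [IsFiniteMeasure μ] {T : Set (Ω × ℝ)} (hT : MeasurableSet T) (t : ℝ) {δ : ℝ → ℝ≥0∞}
    (hδ : Tendsto δ (𝓝[>] 0) (𝓝 0))
    (hcompl : ∀ᶠ ε in 𝓝[>] 0, ∀ τ ∈ Ioo (t - ε) (t + ε), μ {ω | (ω, τ) ∉ T} ≤ δ ε) :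
    Tendsto (fun ε : ℝ => 1 / (2 * ε) *
        ∫ ω, (volume ({τ | (ω, τ) ∈ T} ∩ Ioo (t - ε) (t + ε))).toReal ∂μ)
      (𝓝[>] 0) (𝓝 (μ univ).toReal) := by
  set c : ℝ → ℝ≥0∞ := fun ε => ENNReal.ofReal (2 * ε)
  set F : ℝ → ℝ≥0∞ := fun ε => ∫⁻ ω, volume.restrict (Ioo (t - ε) (t + ε)) (Prod.mk ω ⁻¹' T) ∂μ
  have hsection : ∀ ε ω, volume.restrict (Ioo (t - ε) (t + ε)) (Prod.mk ω ⁻¹' T)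
      = volume ({τ | (ω, τ) ∈ T} ∩ Ioo (t - ε) (t + ε)) := fun ε ω =>
    Measure.restrict_apply (measurable_prodMk_left hT)
  have hc : ∀ ε > 0, c ε ≠ 0 ∧ c ε ≠ ⊤ := fun ε hε =>
    ⟨by simpa [c] using hε, ENNReal.ofReal_ne_top⟩
  have hsum : ∀ ε > 0, F ε + ∫⁻ τ in Ioo (t - ε) (t + ε), μ {ω | (ω, τ) ∉ T} = c ε * μ univ := by
    intro ε hε
    refine (lintegral_measure_section_add_lintegral_measure_section_compl μ _ hT).trans ?_
    rw [Measure.restrict_apply_univ, Real.volume_Ioo, mul_comm]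
    congr 2; ring
  have hreal : ∀ ε > 0, 1 / (2 * ε) *
      ∫ ω, (volume ({τ | (ω, τ) ∈ T} ∩ Ioo (t - ε) (t + ε))).toReal ∂μ = ((c ε)⁻¹ * F ε).toReal := by
    intro ε hε
    simp_rw [← hsection]
    rw [integral_toReal (measurable_measure_prodMk_left hT).aemeasurable
      (ae_of_all _ fun ω => measure_lt_top _ _), ENNReal.toReal_mul, ENNReal.toReal_inv,
      ENNReal.toReal_ofReal (by positivity), one_div]
  have hupper : ∀ᶠ ε in 𝓝[>] 0, (c ε)⁻¹ * F ε ≤ μ univ := by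
    filter_upwards [self_mem_nhdsWithin] with ε hε
    rw [ENNReal.inv_mul_le_iff (hc ε hε).1 (hc ε hε).2, ← hsum ε hε]
    exact le_self_add
  have hlower : ∀ᶠ ε in 𝓝[>] 0, μ univ - δ ε ≤ (c ε)⁻¹ * F ε := by
    filter_upwards [self_mem_nhdsWithin, hcompl] with ε hε hδε
    have hg : ∫⁻ τ in Ioo (t - ε) (t + ε), μ {ω | (ω, τ) ∉ T} ≤ c ε * δ ε := by
      calc _ ≤ ∫⁻ _ in Ioo (t - ε) (t + ε), δ ε := setLIntegral_mono' measurableSet_Ioo hδε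
        _ = c ε * δ ε := by
          rw [setLIntegral_const, Real.volume_Ioo, mul_comm]; congr 2; ring
    calc μ univ - δ ε ≤ (c ε)⁻¹ * (c ε * μ univ) - δ ε := by
          rw [← mul_assoc, ENNReal.inv_mul_cancel (hc ε hε).1 (hc ε hε).2, one_mul]
      _ ≤ (c ε)⁻¹ * F ε := by
          rw [tsub_le_iff_right, ← hsum ε hε, mul_add]
          gcongr
          rwa [ENNReal.inv_mul_le_iff (hc ε hε).1 (hc ε hε).2]
  have hlim : Tendsto (fun ε => (c ε)⁻¹ * F ε) (𝓝[>] 0) (𝓝 (μ univ)) := by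
    refine tendsto_of_tendsto_of_tendsto_of_le_of_le' ?_ tendsto_const_nhds hlower hupper
    simpa using ENNReal.Tendsto.sub tendsto_const_nhds hδ (Or.inl (measure_ne_top μ univ))
  refine ((ENNReal.tendsto_toReal (measure_ne_top μ univ)).comp hlim).congr' ?_
  filter_upwards [self_mem_nhdsWithin] with ε hε
  exact (hreal ε hε).symm

theorem tendsto_measure_cthickening_diff_of_isClosed {α : Type*} [PseudoMetricSpace α]
    [MeasurableSpace α] [OpensMeasurableSpace α] {μ : Measure α} {s : Set α}
    (hfin : ∃ R > 0, μ (cthickening R s) ≠ ⊤) (hs : IsClosed s) :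
    Tendsto (fun r => μ (cthickening r s \ s)) (𝓝 0) (𝓝 0) := by
  obtain ⟨R, hR, hRfin⟩ := hfin
  have hμs : μ s ≠ ⊤ := ne_top_of_le_ne_top hRfin (measure_mono (self_subset_cthickening s))
  simp_rw [measure_sdiff (self_subset_cthickening s) hs.measurableSet.nullMeasurableSet hμs]
  simpa using ENNReal.Tendsto.sub (tendsto_measure_cthickening_of_isClosed ⟨R, hR, hRfin⟩ hs)
    tendsto_const_nhds (Or.inr hμs)

section Curves

variable {X : Type*}

theorem continuous_ev_const [TopologicalSpace X] (τ : ℝ) :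
    Continuous (ev τ : C(unitInterval, X) → X) :=
  continuous_eval_const _

theorem continuous_ev_uncurry [TopologicalSpace X] :
    Continuous fun p : C(unitInterval, X) × ℝ => ev p.2 p.1 :=
  continuous_eval.comp (continuous_fst.prodMk
    ((continuous_projIcc (h := zero_le_one)).comp continuous_snd))

theorem IsCSGeodesic.dist_ev_ev [MetricSpace X] {γ : C(unitInterval, X)} (hγ : IsCSGeodesic γ)
    {τ s : ℝ} (hτ : τ ∈ Icc (0 : ℝ) 1) (hs : s ∈ Icc (0 : ℝ) 1) :
    dist (ev τ γ) (ev s γ) = |τ - s| * dist (γ 0) (γ 1) := by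
  rw [ev, ev, hγ, projIcc_of_mem _ hτ, projIcc_of_mem _ hs]

theorem IsCompact.exists_dist_ev_le_mul [MetricSpace X] {G : Set C(unitInterval, X)}
    (hG : IsCompact G) (hgeo : ∀ γ ∈ G, IsCSGeodesic γ) :
    ∃ L, 0 ≤ L ∧ ∀ γ ∈ G, ∀ τ ∈ Icc (0 : ℝ) 1, ∀ s ∈ Icc (0 : ℝ) 1,
      dist (ev τ γ) (ev s γ) ≤ L * |τ - s| := by
  obtain ⟨D, hD⟩ := hG.exists_bound_of_continuousOn
    ((continuous_eval_const 0).dist (continuous_eval_const 1)).continuousOn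
  refine ⟨max D 0, le_max_right _ _, fun γ hγ τ hτ s hs => ?_⟩
  rw [(hgeo γ hγ).dist_ev_ev hτ hs, mul_comm]
  gcongr
  exact (le_abs_self _).trans ((hD γ hγ).trans (le_max_left _ _))

theorem restrict_ev_notMem_le_map [MetricSpace X] [MeasurableSpace X] [BorelSpace X]
    [MeasurableSpace C(unitInterval, X)] [BorelSpace C(unitInterval, X)]
    (P : Measure C(unitInterval, X)) {G K : Set C(unitInterval, X)} (hK : MeasurableSet K)
    (hKG : K ⊆ G) {τ t r : ℝ} (hr : ∀ γ ∈ G, dist (ev τ γ) (ev t γ) ≤ r) :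
    P.restrict K {γ | ev τ γ ∉ ev t '' G}
      ≤ P.map (ev τ) (cthickening r (ev t '' G) \ ev t '' G) := by
  rw [Measure.restrict_apply' hK]
  refine (measure_mono ?_).trans (Measure.le_map_apply (continuous_ev_const τ).aemeasurable _)
  rintro γ ⟨hγS, hγK⟩
  exact ⟨mem_cthickening_of_dist_le _ _ _ _ (mem_image_of_mem _ (hKG hγK)) (hr γ (hKG hγK)), hγS⟩

end Curves

theorem averaged_density_on_subsets_general
    {X : Type*} [MetricSpace X]
    [MeasurableSpace X] [BorelSpace X]
    (m : MeasureTheory.Measure X)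
    [MeasurableSpace C(unitInterval, X)] [BorelSpace C(unitInterval, X)]
    (P : MeasureTheory.Measure C(unitInterval, X)) [IsProbabilityMeasure P]
    (G : Set C(unitInterval, X))
    (hGcpt : IsCompact G) (hGgeo : ∀ γ ∈ G, IsCSGeodesic γ)
    (t : ℝ) (ht : t ∈ Set.Ioo (0 : ℝ) 1)
    (C : ℝ)
    (U : Set ℝ) (hUnhds : U ∈ nhdsWithin t (Set.Icc (0 : ℝ) 1))
    (hdens : ∀ τ ∈ U, ∀ A : Set X, MeasurableSet A →
      MeasureTheory.Measure.map (ev τ) P A ≤ ENNReal.ofReal C * m A)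
    (ε₀ : ℝ) (hε₀ : 0 < ε₀)
    (hfin : m (Metric.cthickening ε₀ (ev t '' G)) < ⊤) :
    ∀ K : Set C(unitInterval, X), MeasurableSet K → K ⊆ G →
      Filter.Tendsto
        (fun ε : ℝ => (1 / (2 * ε)) *
          ∫ γ in K, (MeasureTheory.volume
              ({τ : ℝ | τ ∈ Set.Icc (0 : ℝ) 1 ∧ ev τ γ ∈ ev t '' G} ∩
                Set.Ioo (t - ε) (t + ε))).toReal ∂P)
        (nhdsWithin 0 (Set.Ioi 0)) (nhds (P K).toReal) := by
  intro K hK hKG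
  set S := ev t '' G
  have hS : IsClosed S := (hGcpt.image (continuous_ev_const t)).isClosed
  obtain ⟨L, hL0, hL⟩ := hGcpt.exists_dist_ev_le_mul hGgeo
  have hUI : U ∩ Icc 0 1 ∈ 𝓝 t := by
    have hI : Icc (0 : ℝ) 1 ∈ 𝓝 t := Icc_mem_nhds ht.1 ht.2
    exact inter_mem (nhdsWithin_eq_nhds.2 hI ▸ hUnhds) hI
  have hδ : Tendsto (fun ε => ENNReal.ofReal C * m (cthickening (L * ε) S \ S))
      (𝓝[>] 0) (𝓝 0) := by
    have hLε : Tendsto (fun ε : ℝ => L * ε) (𝓝[>] 0) (𝓝 0) :=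
      ((continuous_const_mul L).tendsto' 0 0 (mul_zero L)).mono_left nhdsWithin_le_nhds
    simpa using ENNReal.Tendsto.const_mul ((tendsto_measure_cthickening_diff_of_isClosed
      ⟨ε₀, hε₀, hfin.ne⟩ hS).comp hLε) (Or.inr ENNReal.ofReal_ne_top)
  have hT : MeasurableSet {p : C(unitInterval, X) × ℝ | p.2 ∈ Icc 0 1 ∧ ev p.2 p.1 ∈ S} :=
    (measurable_snd measurableSet_Icc).inter (continuous_ev_uncurry.measurable hS.measurableSet)
  have key := tendsto_average_volume_sections_Ioo (P.restrict K) hT t hδ ?_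
  · rwa [Measure.restrict_apply_univ] at key
  filter_upwards [nhdsWithin_le_nhds (eventually_ball_subset hUI)] with ε hε τ hτ
  have hτU : τ ∈ U ∩ Icc 0 1 := hε (by rwa [Real.ball_eq_Ioo])
  have hτt : |τ - t| ≤ ε := (abs_sub_lt_iff.2 ⟨by linarith [hτ.2], by linarith [hτ.1]⟩).le
  calc P.restrict K {γ | (γ, τ) ∉ {p | p.2 ∈ Icc 0 1 ∧ ev p.2 p.1 ∈ S}}
      ≤ P.restrict K {γ | ev τ γ ∉ S} := measure_mono fun γ hγ hγS => hγ ⟨hτU.2, hγS⟩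
    _ ≤ P.map (ev τ) (cthickening (L * ε) S \ S) :=
      restrict_ev_notMem_le_map P hK hKG fun γ hγ =>
        (hL γ hγ τ hτU.2 t (Ioo_subset_Icc_self ht)).trans (by gcongr)
    _ ≤ _ := hdens τ hτU.1 _ (isClosed_cthickening.measurableSet.diff hS.measurableSet)

/-- Under the bounded-density assumption near `t ∈ (0,1)`, for every Borel
set `K ⊆ G` one has
`lim_{ε → 0⁺} (1/(2ε)) ∫_K ℒ¹(I_t(γ) ∩ (t - ε, t + ε)) P(dγ) = P(K)`. -/
theorem averaged_density_on_subsets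
    {X : Type*} [MetricSpace X] [CompleteSpace X] [TopologicalSpace.SeparableSpace X]
    [MeasurableSpace X] [BorelSpace X]
    (m : MeasureTheory.Measure X)
    [MeasurableSpace C(unitInterval, X)] [BorelSpace C(unitInterval, X)]
    (P : MeasureTheory.Measure C(unitInterval, X)) [IsProbabilityMeasure P]
    (G : Set C(unitInterval, X)) (hGsupp : G = mSupport P)
    (hGcpt : IsCompact G) (hGgeo : ∀ γ ∈ G, IsCSGeodesic γ)
    (t : ℝ) (ht : t ∈ Set.Ioo (0 : ℝ) 1)
    (C : ℝ) (hC : 0 < C)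
    (U : Set ℝ) (hUsub : U ⊆ Set.Icc (0 : ℝ) 1) (hUnhds : U ∈ nhdsWithin t (Set.Icc (0 : ℝ) 1))
    (hdens : ∀ τ ∈ U, ∀ A : Set X, MeasurableSet A →
      MeasureTheory.Measure.map (ev τ) P A ≤ ENNReal.ofReal C * m A)
    (ε₀ : ℝ) (hε₀ : 0 < ε₀)
    (hfin : m (Metric.cthickening ε₀ (ev t '' G)) < ⊤) :
    ∀ K : Set C(unitInterval, X), MeasurableSet K → K ⊆ G →
      Filter.Tendsto
        (fun ε : ℝ => (1 / (2 * ε)) *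
          ∫ γ in K, (MeasureTheory.volume
              ({τ : ℝ | τ ∈ Set.Icc (0 : ℝ) 1 ∧ ev τ γ ∈ ev t '' G} ∩
                Set.Ioo (t - ε) (t + ε))).toReal ∂P)
        (nhdsWithin 0 (Set.Ioi 0)) (nhds (P K).toReal) :=
  averaged_density_on_subsets_general m P G hGcpt hGgeo t ht C U hUnhds hdens ε₀ hε₀ hfin
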